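/- The subspace H = span_K{e_u : u ∈ D_μ, u ≠ 1} is invariant; every invariant subspace W with W ≠ V is contained in H, so H is the unique maximal proper invariant subspace of V; moreover U_k(V) ⊆ H for every k, so all U_k act as 0 on the one-dimensional quotient V/H. -/

import Mathlib

/-!
Each `U_k` raises the Coxeter length by one, so it maps `V` into `H`, the span of the `e_u` of
positive length. Conversely, let an invariant `W` contain a vector with nonzero `e_1`-coordinate.
Every `u ≠ 1` in `D_μ` is `s_k v` with `v ∈ D_μ` and `ℓ(v) + 1 = ℓ(u)` (strip a left descent), so
by induction on `ℓ(u)` the vector `e_u` lies in `W` modulo the span of the `e_x` with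
`ℓ(x) > ℓ(u)`; downward induction on length then puts every `e_u` into `W`, i.e. `W = V`.
-/

open scoped Classical

noncomputable section

/-- The Coxeter length of a permutation of `Fin n`: its number of inversions. -/
def permLen {n : ℕ} (w : Equiv.Perm (Fin n)) : ℕ :=
  (Finset.univ.filter fun p : Fin n × Fin n => p.1 < p.2 ∧ w p.2 < w p.1).card

/-- The partial sums (block offsets) of a composition `μ`. -/
def off (μ : ℕ → ℕ) (t : ℕ) : ℕ := ∑ s ∈ Finset.range t, μ s

/-- `p` and `q` lie in the same (consecutive) block of the composition
`(μ 0, …, μ (r-1))`. -/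
def sameBlock (r : ℕ) (μ : ℕ → ℕ) (p q : ℕ) : Prop :=
  ∃ t < r, off μ t ≤ p ∧ p < off μ (t + 1) ∧ off μ t ≤ q ∧ q < off μ (t + 1)

/-- The set `D_μ` of minimal-length representatives of the left cosets `u • S_μ`:
permutations increasing on each block of `μ`. -/
def Dmu (n r : ℕ) (μ : ℕ → ℕ) : Set (Equiv.Perm (Fin n)) :=
  {u | ∀ p q : Fin n, p < q → sameBlock r μ (p : ℕ) (q : ℕ) → u p < u q}

/-- The adjacent transposition `s_k = (k, k+1)` (0-indexed), as a permutation
of `Fin n` (junk value `1` if out of range). -/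
def adjSwap (n k : ℕ) : Equiv.Perm (Fin n) :=
  if h : k + 1 < n then Equiv.swap ⟨k, Nat.lt_of_succ_lt h⟩ ⟨k + 1, h⟩ else 1

/-- The index type for the basis `{e_u : u ∈ D_μ}` of the vector space `V`. -/
abbrev DmuSub (n r : ℕ) (μ : ℕ → ℕ) : Type := {u : Equiv.Perm (Fin n) // u ∈ Dmu n r μ}

/-- The defining property of the family of `K`-linear operators
`U_k : V → V` on `V = (DmuSub n r μ → K)`:
`U_k (e_u) = e_{s_k u}` if `ℓ(s_k u) = ℓ(u) + 1` and `s_k u ∈ D_μ`, and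
`U_k (e_u) = 0` otherwise (here `e_u = Pi.single u 1`). -/
def IsUFamily (K : Type*) [Field K] (n r : ℕ) (μ : ℕ → ℕ)
    (U : ℕ → ((DmuSub n r μ → K) →ₗ[K] (DmuSub n r μ → K))) : Prop :=
  ∀ k, k + 1 < n → ∀ u : DmuSub n r μ,
    U k (Pi.single u (1 : K)) =
      if h : permLen (adjSwap n k * u.1) = permLen u.1 + 1 ∧
          adjSwap n k * u.1 ∈ Dmu n r μ
      then Pi.single (⟨adjSwap n k * u.1, h.2⟩ : DmuSub n r μ) (1 : K) else 0

open Equiv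

section Inversions

variable {n : ℕ}

def inversions (w : Perm (Fin n)) : Finset (Fin n × Fin n) :=
  Finset.univ.filter fun p => p.1 < p.2 ∧ w p.2 < w p.1

lemma mem_inversions {w : Perm (Fin n)} {p : Fin n × Fin n} :
    p ∈ inversions w ↔ p.1 < p.2 ∧ w p.2 < w p.1 := by
  simp [inversions]

lemma permLen_eq_card_inversions (w : Perm (Fin n)) : permLen w = (inversions w).card := rfl

lemma permLen_le (w : Perm (Fin n)) : permLen w ≤ n * n := by
  rw [permLen_eq_card_inversions]
  exact (Finset.card_filter_le _ _).trans (by simp)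

lemma eq_one_of_strictMono {u : Perm (Fin n)} (hu : StrictMono u) : u = 1 := by
  have : hu.orderIsoOfSurjective u u.surjective = OrderIso.refl _ := Subsingleton.elim _ _
  ext x
  exact congrArg Fin.val (DFunLike.congr_fun this x)

lemma permLen_eq_zero_iff {u : Perm (Fin n)} : permLen u = 0 ↔ u = 1 := by
  rw [permLen_eq_card_inversions, Finset.card_eq_zero, Finset.eq_empty_iff_forall_notMem]
  refine ⟨fun h => eq_one_of_strictMono fun p q hpq => ?_, ?_⟩
  · by_contra hle
    exact h (p, q) (mem_inversions.2
      ⟨hpq, (not_lt.1 hle).lt_of_ne (u.injective.ne hpq.ne')⟩)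
  · rintro rfl p hp
    exact (mem_inversions.1 hp).1.asymm (mem_inversions.1 hp).2

lemma permLen_one : permLen (1 : Perm (Fin n)) = 0 := permLen_eq_zero_iff.2 rfl

lemma adjSwap_eq {k : ℕ} (h : k + 1 < n) :
    adjSwap n k = swap ⟨k, by omega⟩ ⟨k + 1, h⟩ := dif_pos h

lemma adjSwap_lt_adjSwap_iff {k : ℕ} (h : k + 1 < n) (x y : Fin n) :
    adjSwap n k x < adjSwap n k y ↔
      (x < y ∧ ¬(x = ⟨k, by omega⟩ ∧ y = ⟨k + 1, h⟩)) ∨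
        (x = ⟨k + 1, h⟩ ∧ y = ⟨k, by omega⟩) := by
  simp only [adjSwap_eq h, swap_apply_def, Fin.lt_def, Fin.ext_iff]
  split_ifs <;> simp_all <;> omega

lemma exists_descent {u : Perm (Fin n)} (hu : u ≠ 1) :
    ∃ k, ∃ h : k + 1 < n, u⁻¹ ⟨k + 1, h⟩ < u⁻¹ ⟨k, by omega⟩ := by
  contrapose! hu
  rw [← inv_eq_one]
  cases n with
  | zero => exact Subsingleton.elim _ _
  | succ m =>
    refine eq_one_of_strictMono (Fin.strictMono_iff_lt_succ.2 fun i => ?_)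
    exact (hu i i.succ.isLt).lt_of_ne (u⁻¹.injective.ne Fin.castSucc_lt_succ.ne)

lemma inversions_adjSwap_mul {k : ℕ} (h : k + 1 < n) {u : Perm (Fin n)}
    (hd : u⁻¹ ⟨k + 1, h⟩ < u⁻¹ ⟨k, by omega⟩) :
    inversions (adjSwap n k * u) = (inversions u).erase (u⁻¹ ⟨k + 1, h⟩, u⁻¹ ⟨k, by omega⟩) := by
  ext ⟨p, q⟩
  simp only [Finset.mem_erase, mem_inversions, Perm.mul_apply, adjSwap_lt_adjSwap_iff h,
    ← Perm.eq_inv_iff_eq, ne_eq, Prod.ext_iff]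
  constructor
  · rintro ⟨hpq, ⟨huv, hne⟩ | ⟨rfl, rfl⟩⟩
    · exact ⟨fun ⟨h1, h2⟩ => hne ⟨h2, h1⟩, hpq, huv⟩
    · exact absurd hpq hd.asymm
  · rintro ⟨hne, hpq, huv⟩
    exact ⟨hpq, Or.inl ⟨huv, fun ⟨h1, h2⟩ => hne ⟨h2, h1⟩⟩⟩

lemma permLen_adjSwap_mul_add_one {k : ℕ} (h : k + 1 < n) {u : Perm (Fin n)}
    (hd : u⁻¹ ⟨k + 1, h⟩ < u⁻¹ ⟨k, by omega⟩) :
    permLen (adjSwap n k * u) + 1 = permLen u := by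
  have hmem : (u⁻¹ ⟨k + 1, h⟩, u⁻¹ ⟨k, by omega⟩) ∈ inversions u :=
    mem_inversions.2 ⟨hd, by simp [Fin.lt_def]⟩
  rw [permLen_eq_card_inversions, permLen_eq_card_inversions, inversions_adjSwap_mul h hd,
    Finset.card_erase_add_one hmem]

end Inversions

section Dmu

variable {n r : ℕ} {μ : ℕ → ℕ}

lemma adjSwap_mul_mem_Dmu {k : ℕ} (h : k + 1 < n) {u : Perm (Fin n)} (hu : u ∈ Dmu n r μ)
    (hd : u⁻¹ ⟨k + 1, h⟩ < u⁻¹ ⟨k, by omega⟩) :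
    adjSwap n k * u ∈ Dmu n r μ := by
  intro p q hpq hblk
  rw [Perm.mul_apply, Perm.mul_apply, adjSwap_lt_adjSwap_iff h]
  refine Or.inl ⟨hu p q hpq hblk, fun ⟨hp, hq⟩ => ?_⟩
  rw [Perm.eq_inv_iff_eq.2 hp, Perm.eq_inv_iff_eq.2 hq] at hpq
  exact hd.asymm hpq

lemma exists_adjSwap_mul_eq {u : Perm (Fin n)} (hu : u ∈ Dmu n r μ) (hne : u ≠ 1) :
    ∃ k, k + 1 < n ∧ ∃ v ∈ Dmu n r μ, adjSwap n k * v = u ∧ permLen v + 1 = permLen u := by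
  obtain ⟨k, h, hd⟩ := exists_descent hne
  refine ⟨k, h, adjSwap n k * u, adjSwap_mul_mem_Dmu h hu hd, ?_,
    permLen_adjSwap_mul_add_one h hd⟩
  rw [← mul_assoc, adjSwap_eq h, swap_mul_self, one_mul]

end Dmu

lemma mem_span_single_of_eq_zero {R ι : Type*} [Semiring R] [Fintype ι] [DecidableEq ι]
    {p : ι → Prop} {f : ι → R} (hf : ∀ i, ¬p i → f i = 0) :
    f ∈ Submodule.span R {g | ∃ i, p i ∧ g = Pi.single i 1} := by
  rw [← Finset.univ_sum_single f]
  refine Submodule.sum_mem _ fun i _ => ?_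
  by_cases hi : p i
  · rw [← mul_one (f i), ← smul_eq_mul, Pi.single_smul']
    exact Submodule.smul_mem _ _ (Submodule.subset_span ⟨i, hi, rfl⟩)
  · rw [hf i hi, Pi.single_zero]
    exact zero_mem _

def lenAtLeast (K : Type*) [Field K] (n r : ℕ) (μ : ℕ → ℕ) (m : ℕ) :
    Submodule K (DmuSub n r μ → K) :=
  Submodule.span K {f | ∃ u : DmuSub n r μ, m ≤ permLen u.1 ∧ f = Pi.single u 1}

section Operators

variable {K : Type*} [Field K] {n r : ℕ} {μ : ℕ → ℕ}

def IsUInvariant (U : ℕ → ((DmuSub n r μ → K) →ₗ[K] (DmuSub n r μ → K)))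
    (W : Submodule K (DmuSub n r μ → K)) : Prop :=
  ∀ k, k + 1 < n → ∀ v ∈ W, U k v ∈ W

lemma lenAtLeast_antitone : Antitone (lenAtLeast K n r μ) := fun _ _ h =>
  Submodule.span_mono fun _ ⟨u, hu, hf⟩ => ⟨u, h.trans hu, hf⟩

lemma lenAtLeast_zero : lenAtLeast K n r μ 0 = ⊤ :=
  Submodule.eq_top_iff'.2 fun _ => mem_span_single_of_eq_zero fun _ h => absurd (Nat.zero_le _) h

lemma lenAtLeast_one :
    lenAtLeast K n r μ 1 =
      Submodule.span K {f | ∃ u : DmuSub n r μ, u.1 ≠ 1 ∧ f = Pi.single u (1 : K)} := by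
  simp_rw [lenAtLeast, Nat.one_le_iff_ne_zero, ne_eq, permLen_eq_zero_iff]

variable {U : ℕ → ((DmuSub n r μ → K) →ₗ[K] (DmuSub n r μ → K))}

lemma IsUFamily.apply_single_mem (hU : IsUFamily K n r μ U) {k : ℕ} (hk : k + 1 < n)
    (x : DmuSub n r μ) : U k (Pi.single x 1) ∈ lenAtLeast K n r μ (permLen x.1 + 1) := by
  rw [hU k hk x]
  split_ifs with h
  · exact Submodule.subset_span ⟨⟨adjSwap n k * x.1, h.2⟩, h.1.ge, rfl⟩
  · exact zero_mem _

lemma IsUFamily.apply_mem (hU : IsUFamily K n r μ U) {k : ℕ} (hk : k + 1 < n) {m : ℕ}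
    {v : DmuSub n r μ → K} (hv : v ∈ lenAtLeast K n r μ m) :
    U k v ∈ lenAtLeast K n r μ (m + 1) := by
  refine (Submodule.span_le (p := (lenAtLeast K n r μ (m + 1)).comap (U k))).2 ?_ hv
  rintro _ ⟨x, hx, rfl⟩
  exact lenAtLeast_antitone (by omega) (hU.apply_single_mem hk x)

lemma IsUFamily.apply_single_of_mul_eq (hU : IsUFamily K n r μ U) {k : ℕ} (hk : k + 1 < n)
    {u v : DmuSub n r μ} (hvu : adjSwap n k * v.1 = u.1) (hlen : permLen v.1 + 1 = permLen u.1) :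
    U k (Pi.single v 1) = Pi.single u 1 := by
  have h : permLen (adjSwap n k * v.1) = permLen v.1 + 1 ∧ adjSwap n k * v.1 ∈ Dmu n r μ := by
    rw [hvu]
    exact ⟨hlen.symm, u.2⟩
  rw [hU k hk v, dif_pos h, show (⟨_, h.2⟩ : DmuSub n r μ) = u from Subtype.ext hvu]

lemma IsUFamily.single_mem_sup_lenAtLeast (hU : IsUFamily K n r μ U)
    {W : Submodule K (DmuSub n r μ → K)} (hW : IsUInvariant U W)
    (hWH : ¬W ≤ lenAtLeast K n r μ 1) (u : DmuSub n r μ) :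
    Pi.single u 1 ∈ W ⊔ lenAtLeast K n r μ (permLen u.1 + 1) := by
  by_cases hu : u.1 = 1
  · have eq_u : ∀ x : DmuSub n r μ, ¬1 ≤ permLen x.1 → x = u := fun x hx =>
      Subtype.ext ((permLen_eq_zero_iff.1 (by omega)).trans hu.symm)
    obtain ⟨w, hwW, hwH⟩ := SetLike.not_le_iff_exists.1 hWH
    have hwu : w u ≠ 0 := by
      contrapose! hwH
      exact mem_span_single_of_eq_zero fun x hx => eq_u x hx ▸ hwH
    rw [hu, permLen_one]
    refine Submodule.mem_sup.2 ⟨(w u)⁻¹ • w, W.smul_mem _ hwW, Pi.single u 1 - (w u)⁻¹ • w,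
      mem_span_single_of_eq_zero fun x hx => ?_, add_sub_cancel _ _⟩
    obtain rfl := eq_u x hx
    simp [hwu]
  · obtain ⟨k, hk, v, hv, hvu, hlen⟩ := exists_adjSwap_mul_eq u.2 hu
    obtain ⟨y, hy, z, hz, hyz⟩ :=
      Submodule.mem_sup.1 (hU.single_mem_sup_lenAtLeast hW hWH ⟨v, hv⟩)
    rw [← hU.apply_single_of_mul_eq hk (v := ⟨v, hv⟩) hvu hlen, ← hyz, map_add, ← hlen]
    exact Submodule.add_mem_sup (hW k hk y hy) (hU.apply_mem hk hz)
termination_by permLen u.1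
decreasing_by omega

lemma IsUFamily.single_mem (hU : IsUFamily K n r μ U) {W : Submodule K (DmuSub n r μ → K)}
    (hW : IsUInvariant U W) (hWH : ¬W ≤ lenAtLeast K n r μ 1) (u : DmuSub n r μ) :
    Pi.single u 1 ∈ W := by
  have hL : lenAtLeast K n r μ (permLen u.1 + 1) ≤ W := by
    refine Submodule.span_le.2 ?_
    rintro _ ⟨x, hx, rfl⟩
    exact hU.single_mem hW hWH x
  exact sup_le le_rfl hL (hU.single_mem_sup_lenAtLeast hW hWH u)
termination_by n * n - permLen u.1
decreasing_by have := permLen_le x.1; omega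

lemma IsUFamily.eq_top (hU : IsUFamily K n r μ U) {W : Submodule K (DmuSub n r μ → K)}
    (hW : IsUInvariant U W) (hWH : ¬W ≤ lenAtLeast K n r μ 1) : W = ⊤ := by
  rw [eq_top_iff, ← lenAtLeast_zero, lenAtLeast, Submodule.span_le]
  rintro _ ⟨u, -, rfl⟩
  exact hU.single_mem hW hWH u

end Operators

theorem stmt10_general (K : Type*) [Field K] {n r : ℕ} (μ : ℕ → ℕ)
    (U : ℕ → ((DmuSub n r μ → K) →ₗ[K] (DmuSub n r μ → K)))
    (hU : IsUFamily K n r μ U) :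
    (∀ k, k + 1 < n → ∀ v ∈ Submodule.span K
        {f : DmuSub n r μ → K | ∃ u : DmuSub n r μ, u.1 ≠ 1 ∧ f = Pi.single u (1 : K)},
      U k v ∈ Submodule.span K
        {f : DmuSub n r μ → K | ∃ u : DmuSub n r μ, u.1 ≠ 1 ∧ f = Pi.single u (1 : K)}) ∧
    (∀ W : Submodule K (DmuSub n r μ → K),
      (∀ k, k + 1 < n → ∀ v ∈ W, U k v ∈ W) → W ≠ ⊤ →
      W ≤ Submodule.span K
        {f : DmuSub n r μ → K | ∃ u : DmuSub n r μ, u.1 ≠ 1 ∧ f = Pi.single u (1 : K)}) ∧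
    (∀ k, k + 1 < n → ∀ v : DmuSub n r μ → K,
      U k v ∈ Submodule.span K
        {f : DmuSub n r μ → K | ∃ u : DmuSub n r μ, u.1 ≠ 1 ∧ f = Pi.single u (1 : K)}) := by
  rw [← lenAtLeast_one]
  have hrange : ∀ k, k + 1 < n → ∀ v, U k v ∈ lenAtLeast K n r μ 1 := fun k hk v =>
    hU.apply_mem hk (lenAtLeast_zero (K := K) ▸ Submodule.mem_top)
  refine ⟨fun k hk v _ => hrange k hk v, fun W hW hne => ?_, hrange⟩
  by_contra hWH
  exact hne (hU.eq_top hW hWH)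

/-- Lemma 1.3(ii) of the paper, concretely: the span `H` of the
basis vectors `e_u` with `u ≠ 1` is invariant, every invariant subspace
`W ≠ V` is contained in `H` (so `H` is the unique maximal proper invariant
subspace of `V`), and `U_k(V) ⊆ H` for every `k` (so every `U_k` acts as `0`
on the quotient `V/H`). -/
theorem stmt10 (K : Type*) [Field K] {n r : ℕ} (hn : 1 ≤ n) (μ : ℕ → ℕ)
    (hpos : ∀ t < r, 1 ≤ μ t) (hsum : off μ r = n)
    (U : ℕ → ((DmuSub n r μ → K) →ₗ[K] (DmuSub n r μ → K)))
    (hU : IsUFamily K n r μ U) :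
    (∀ k, k + 1 < n → ∀ v ∈ Submodule.span K
        {f : DmuSub n r μ → K | ∃ u : DmuSub n r μ, u.1 ≠ 1 ∧ f = Pi.single u (1 : K)},
      U k v ∈ Submodule.span K
        {f : DmuSub n r μ → K | ∃ u : DmuSub n r μ, u.1 ≠ 1 ∧ f = Pi.single u (1 : K)}) ∧
    (∀ W : Submodule K (DmuSub n r μ → K),
      (∀ k, k + 1 < n → ∀ v ∈ W, U k v ∈ W) → W ≠ ⊤ →
      W ≤ Submodule.span K
        {f : DmuSub n r μ → K | ∃ u : DmuSub n r μ, u.1 ≠ 1 ∧ f = Pi.single u (1 : K)}) ∧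
    (∀ k, k + 1 < n → ∀ v : DmuSub n r μ → K,
      U k v ∈ Submodule.span K
        {f : DmuSub n r μ → K | ∃ u : DmuSub n r μ, u.1 ≠ 1 ∧ f = Pi.single u (1 : K)}) :=
  stmt10_general K μ U hU
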